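/- arXiv:2012.10178 — 2 statements merged into one kernel-verified Lean document; each statement's English description precedes it below -/
import Mathlib

section
/- The bracket rules of the solvable extension R_{𝐧₁}(0) — namely 𝐧₁ together with x, y, where [e_{3i-2},x] = i e_{3i-2}, [e_{3i-1},x] = (i-1) e_{3i-1}, [e_{3i},x] = i e_{3i}, [e_{3i-2},y] = −e_{3i-2}, [e_{3i-1},y] = e_{3i-1}, [e_{3i},y] = 0, [x,y] = 0 — satisfy the Jacobi identity, so R_{𝐧₁}(0) is a Lie algebra containing 𝐧₁ as an ideal. -/
/-- Structure constants of `𝐧₁`. -/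
def cc (i j : ℕ) : ℤ :=
  if ((i : ℤ) - j) % 3 = 1 then 1 else if ((i : ℤ) - j) % 3 = 2 then -1 else 0

/-- The free `ℂ`-vector space on `{e_i : i ≥ 1}`. -/
abbrev NSpace := {n : ℕ // 0 < n} →₀ ℂ

/-- The bracket of `𝐧₁`: `[e_i,e_j] = c_{i,j} e_{i+j}`, extended bilinearly. -/
noncomputable def n1br (f g : NSpace) : NSpace :=
  f.sum fun i a => g.sum fun j b =>
    (a * b * (cc i.1 j.1 : ℂ)) •
      Finsupp.single ⟨i.1 + j.1, Nat.add_pos_left i.2 j.1⟩ (1 : ℂ)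

/-- Eigenvalue of `ad x` (from the right) on `e_n`:
`[e_{3i-2},x] = i e_{3i-2}`, `[e_{3i-1},x] = (i-1) e_{3i-1}`, `[e_{3i},x] = i e_{3i}`. -/
def lam (n : ℕ) : ℕ :=
  if n % 3 = 1 then (n + 2) / 3 else if n % 3 = 2 then (n - 2) / 3 else n / 3

/-- Eigenvalue of `ad y` (from the right) on `e_n`:
`[e_{3i-2},y] = -e_{3i-2}`, `[e_{3i-1},y] = e_{3i-1}`, `[e_{3i},y] = 0`. -/
def mu (n : ℕ) : ℤ :=
  if n % 3 = 1 then -1 else if n % 3 = 2 then 1 else 0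

/-- The diagonal action `f ↦ [f, x]` on `𝐧₁`. -/
noncomputable def Dx (f : NSpace) : NSpace :=
  f.sum fun i a => (a * (lam i.1 : ℂ)) • Finsupp.single i (1 : ℂ)

/-- The diagonal action `f ↦ [f, y]` on `𝐧₁`. -/
noncomputable def Dy (f : NSpace) : NSpace :=
  f.sum fun i a => (a * (mu i.1 : ℂ)) • Finsupp.single i (1 : ℂ)

/-- The underlying space of `R_{𝐧₁}(0) = ℂx ⊕ ℂy ⊕ 𝐧₁`: an element `(a, b, f)`
represents `a·x + b·y + f`. -/
abbrev RSpace := ℂ × ℂ × NSpace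

/-- The bracket of `R_{𝐧₁}(0)`, extending the bracket of `𝐧₁` by the rules
`[e_{3i-2},x] = i e_{3i-2}`, `[e_{3i-1},x] = (i-1)e_{3i-1}`, `[e_{3i},x] = i e_{3i}`,
`[e_{3i-2},y] = -e_{3i-2}`, `[e_{3i-1},y] = e_{3i-1}`, `[e_{3i},y] = 0`, `[x,y] = 0`. -/
noncomputable def rbr (p q : RSpace) : RSpace :=
  (0, 0, n1br p.2.2 q.2.2 + q.1 • Dx p.2.2 + q.2.1 • Dy p.2.2
    - p.1 • Dx q.2.2 - p.2.1 • Dy q.2.2)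

/-!
The structure constants `c_{i,j}` depend only on `i - j` modulo 3, so the Jacobi identity of `𝐧₁`
reduces to a finite check over `ZMod 3`. The operators `[·, x]` and `[·, y]` are diagonal in the
basis `(e_i)`, and their eigenvalues are additive along every pair `(i, j)` with `c_{i,j} ≠ 0`;
hence they are commuting derivations of `𝐧₁`, and `R_{𝐧₁}(0)` is the semidirect product of `ℂ²`
with `𝐧₁` along them, for which antisymmetry and the Jacobi identity are formal.
-/

section SemidirectProduct

variable {R M : Type*} [CommRing R] [AddCommGroup M] [Module R M]
  (B : M →ₗ[R] M →ₗ[R] M) (D E : M →ₗ[R] M)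

/-- `(a, b, f)` stands for `a • x + b • y + f`, where `D f = [f, x]` and `E f = [f, y]`. -/
def semidirectBracket (p q : R × R × M) : R × R × M :=
  (0, 0, B p.2.2 q.2.2 + q.1 • D p.2.2 + q.2.1 • E p.2.2 - p.1 • D q.2.2 - p.2.1 • E q.2.2)

variable {B D E}

theorem semidirectBracket_swap (hB : ∀ f g, B f g = -B g f) (p q : R × R × M) :
    semidirectBracket B D E p q = -semidirectBracket B D E q p := by
  simp only [semidirectBracket, Prod.neg_mk, neg_zero, hB p.2.2 q.2.2]
  congr 2
  module

theorem semidirectBracket_jacobi (hB : ∀ f g, B f g = -B g f)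
    (hJ : ∀ f g h, B f (B g h) + B g (B h f) + B h (B f g) = 0)
    (hD : ∀ f g, D (B f g) = B (D f) g + B f (D g))
    (hE : ∀ f g, E (B f g) = B (E f) g + B f (E g))
    (hDE : ∀ f, D (E f) = E (D f)) (p q r : R × R × M) :
    semidirectBracket B D E p (semidirectBracket B D E q r) +
      semidirectBracket B D E q (semidirectBracket B D E r p) +
      semidirectBracket B D E r (semidirectBracket B D E p q) = 0 := by
  obtain ⟨a, b, f⟩ := p
  obtain ⟨a', b', g⟩ := q
  obtain ⟨a'', b'', h⟩ := r
  simp only [semidirectBracket, Prod.mk_add_mk, add_zero, Prod.mk_eq_zero, true_and, map_add,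
    map_sub, map_smul, hD, hE, hDE]
  linear_combination (norm := module) hJ f g h - a • hB (D g) h - a' • hB (D h) f
    - a'' • hB (D f) g - b • hB (E g) h - b' • hB (E h) f - b'' • hB (E f) g

end SemidirectProduct

namespace Finsupp

variable {α R : Type*} [CommRing R]

noncomputable def diagonalMap (w : α → R) : (α →₀ R) →ₗ[R] (α →₀ R) :=
  Finsupp.lift _ R α fun i => single i (w i)

theorem diagonalMap_single (w : α → R) (i : α) (a : R) :
    diagonalMap w (single i a) = single i (a * w i) := by
  simp [diagonalMap, smul_single]

theorem diagonalMap_comm (v w : α → R) (f : α →₀ R) :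
    diagonalMap v (diagonalMap w f) = diagonalMap w (diagonalMap v f) := by
  induction f using induction_linear with
  | zero => simp
  | add f₁ f₂ h₁ h₂ => simp only [map_add, h₁, h₂]
  | single i a => simp only [diagonalMap_single, mul_right_comm]

noncomputable def structureBracket [Add α] (c : α → α → R) :
    (α →₀ R) →ₗ[R] (α →₀ R) →ₗ[R] (α →₀ R) :=
  Finsupp.lift _ R α fun i => Finsupp.lift _ R α fun j => single (i + j) (c i j)

section Add

variable [Add α] {c : α → α → R}

theorem structureBracket_single (i j : α) (a b : R) :
    structureBracket c (single i a) (single j b) = single (i + j) (a * b * c i j) := by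
  rw [structureBracket, lift_apply, sum_single_index (by simp), LinearMap.smul_apply, lift_apply,
    sum_single_index (by simp), smul_single, smul_single, smul_eq_mul, smul_eq_mul, mul_assoc]

theorem diagonalMap_structureBracket {w : α → R}
    (hw : ∀ i j, c i j ≠ 0 → w (i + j) = w i + w j) (f g : α →₀ R) :
    diagonalMap w (structureBracket c f g) =
      structureBracket c (diagonalMap w f) g + structureBracket c f (diagonalMap w g) := by
  induction f using induction_linear with
  | zero => simp
  | add f₁ f₂ h₁ h₂ => simp only [map_add, LinearMap.add_apply, h₁, h₂]; abel
  | single i a =>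
    induction g using induction_linear with
    | zero => simp
    | add g₁ g₂ h₁ h₂ => simp only [map_add, h₁, h₂]; abel
    | single j b =>
      simp only [structureBracket_single, diagonalMap_single, ← single_add]
      congr 1
      by_cases h : c i j = 0
      · simp [h]
      · rw [hw i j h]; ring

end Add

theorem structureBracket_swap [AddCommMagma α] {c : α → α → R} (hc : ∀ i j, c i j = -c j i)
    (f g : α →₀ R) :
    structureBracket c f g = -structureBracket c g f := by
  induction f using induction_linear with
  | zero => simp
  | add f₁ f₂ h₁ h₂ => simp only [map_add, LinearMap.add_apply, h₁, h₂, neg_add]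
  | single i a =>
    induction g using induction_linear with
    | zero => simp
    | add g₁ g₂ h₁ h₂ => simp only [map_add, LinearMap.add_apply, h₁, h₂, neg_add]
    | single j b =>
      rw [structureBracket_single, structureBracket_single, hc, add_comm, ← single_neg]
      ring_nf

theorem structureBracket_jacobi [AddCommSemigroup α] {c : α → α → R}
    (hc : ∀ i j k, c j k * c i (j + k) + c k i * c j (k + i) + c i j * c k (i + j) = 0)
    (f g h : α →₀ R) :
    structureBracket c f (structureBracket c g h) + structureBracket c g (structureBracket c h f) +
      structureBracket c h (structureBracket c f g) = 0 := by
  induction f using induction_linear with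
  | zero => simp
  | add f₁ f₂ h₁ h₂ =>
    simp only [map_add, LinearMap.add_apply]
    linear_combination (norm := module) h₁ + h₂
  | single i a =>
    induction g using induction_linear with
    | zero => simp
    | add g₁ g₂ h₁ h₂ =>
      simp only [map_add, LinearMap.add_apply]
      linear_combination (norm := module) h₁ + h₂
    | single j b =>
      induction h using induction_linear with
      | zero => simp
      | add h₁ h₂ ih₁ ih₂ =>
        simp only [map_add, LinearMap.add_apply]
        linear_combination (norm := module) ih₁ + ih₂
      | single k d =>
        simp only [structureBracket_single]
        rw [show j + (k + i) = i + (j + k) by ac_rfl, show k + (i + j) = i + (j + k) by ac_rfl,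
          ← single_add, ← single_add, single_eq_zero]
        linear_combination a * b * d * hc i j k

end Finsupp

theorem cc_eq_zmod (m n : ℕ) :
    cc m n = if (m - n : ZMod 3) = 1 then 1 else if (m - n : ZMod 3) = 2 then -1 else 0 := by
  have hcast : (m - n : ZMod 3) = ((((m : ℤ) - n) % 3 : ℤ) : ZMod 3) := by
    exact_mod_cast (ZMod.intCast_mod ((m : ℤ) - n) 3).symm
  have hr : ((m : ℤ) - n) % 3 = 0 ∨ ((m : ℤ) - n) % 3 = 1 ∨ ((m : ℤ) - n) % 3 = 2 := by omega
  rw [cc, hcast]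
  rcases hr with hr | hr | hr <;> rw [hr] <;> decide

theorem cc_swap (i j : ℕ) : cc i j = -cc j i := by
  unfold cc; split_ifs <;> omega

theorem cc_jacobi (i j k : ℕ) :
    cc j k * cc i (j + k) + cc k i * cc j (k + i) + cc i j * cc k (i + j) = 0 := by
  simp only [cc_eq_zmod, Nat.cast_add]
  generalize (i : ZMod 3) = a, (j : ZMod 3) = b, (k : ZMod 3) = c
  revert a b c
  decide

theorem lam_add_of_cc_ne_zero {i j : ℕ} (h : cc i j ≠ 0) : lam (i + j) = lam i + lam j := by
  unfold cc at h; unfold lam; split_ifs at h ⊢ <;> omega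

theorem mu_add_of_cc_ne_zero {i j : ℕ} (h : cc i j ≠ 0) : mu (i + j) = mu i + mu j := by
  unfold cc at h; unfold mu; split_ifs at h ⊢ <;> omega

theorem n1br_eq_structureBracket (f g : NSpace) :
    n1br f g = Finsupp.structureBracket (fun i j => (cc i.1 j.1 : ℂ)) f g := by
  simp only [n1br, Finsupp.structureBracket, Finsupp.lift_apply, Finsupp.sum, LinearMap.coe_sum,
    Finset.sum_apply, LinearMap.smul_apply, Finset.smul_sum, Finsupp.smul_single, smul_eq_mul,
    mul_assoc, mul_one]
  rfl

theorem Dx_eq_diagonalMap (f : NSpace) : Dx f = Finsupp.diagonalMap (fun i => (lam i.1 : ℂ)) f := by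
  simp only [Dx, Finsupp.diagonalMap, Finsupp.lift_apply, Finsupp.smul_single, smul_eq_mul, mul_one]

theorem Dy_eq_diagonalMap (f : NSpace) : Dy f = Finsupp.diagonalMap (fun i => (mu i.1 : ℂ)) f := by
  simp only [Dy, Finsupp.diagonalMap, Finsupp.lift_apply, Finsupp.smul_single, smul_eq_mul, mul_one]

theorem rbr_eq_semidirectBracket (p q : RSpace) :
    rbr p q = semidirectBracket (Finsupp.structureBracket fun i j => (cc i.1 j.1 : ℂ))
      (Finsupp.diagonalMap fun i => (lam i.1 : ℂ)) (Finsupp.diagonalMap fun i => (mu i.1 : ℂ))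
      p q := by
  simp only [rbr, semidirectBracket, n1br_eq_structureBracket, Dx_eq_diagonalMap,
    Dy_eq_diagonalMap]

/-- the bracket rules of `R_{𝐧₁}(0)` satisfy antisymmetry and the Jacobi
identity, so `R_{𝐧₁}(0)` is a Lie algebra containing `𝐧₁` as an ideal. -/
theorem statement12 :
    (∀ p q : RSpace, rbr p q = - rbr q p) ∧
    (∀ p q r : RSpace, rbr p (rbr q r) + rbr q (rbr r p) + rbr r (rbr p q) = 0) ∧
    (∀ p q : RSpace, p.1 = 0 → p.2.1 = 0 → (rbr p q).1 = 0 ∧ (rbr p q).2.1 = 0) := by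
  let c : {n : ℕ // 0 < n} → {n : ℕ // 0 < n} → ℂ := fun i j => cc i.1 j.1
  have hc_swap : ∀ i j, c i j = -c j i := fun i j => by simp [c, cc_swap i.1 j.1]
  have hc_jacobi : ∀ i j k, c j k * c i (j + k) + c k i * c j (k + i) + c i j * c k (i + j) = 0 :=
    fun i j k => by simp only [c]; exact_mod_cast cc_jacobi i.1 j.1 k.1
  have hx := Finsupp.diagonalMap_structureBracket (c := c) (w := fun i => (lam i.1 : ℂ))
    fun i j h => by simp only [c] at h; exact_mod_cast lam_add_of_cc_ne_zero (by exact_mod_cast h)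
  have hy := Finsupp.diagonalMap_structureBracket (c := c) (w := fun i => (mu i.1 : ℂ))
    fun i j h => by simp only [c] at h; exact_mod_cast mu_add_of_cc_ne_zero (by exact_mod_cast h)
  have hB := Finsupp.structureBracket_swap hc_swap
  refine ⟨fun p q => ?_, fun p q r => ?_, fun p q _ _ => ⟨rfl, rfl⟩⟩
  · simp only [rbr_eq_semidirectBracket]
    exact semidirectBracket_swap hB p q
  · simp only [rbr_eq_semidirectBracket]
    exact semidirectBracket_jacobi hB (Finsupp.structureBracket_jacobi hc_jacobi) hx hy
      (Finsupp.diagonalMap_comm _ _) p q r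
end

section
/- The non-negative part of the Witt algebra, with basis {e_i : i ≥ 0} and bracket [e_i,e_j] = (i-j)e_{i+j}, is potentially solvable but not potentially nilpotent: the intersection of its derived series is zero, but the intersection of its lower central series is nonzero (indeed L^k = span{e_i : i ≥ 1} for all k ≥ 2). -/
/-- The non-negative part of the Witt algebra: the free `ℂ`-vector space on the basis
`{e_i : i ≥ 0}`, with bracket `[e_i,e_j] = (i-j) e_{i+j}` extended bilinearly. -/
noncomputable def wbr (f g : ℕ →₀ ℂ) : ℕ →₀ ℂ :=
  f.sum fun i a => g.sum fun j b =>
    (a * b * ((i : ℂ) - (j : ℂ))) • Finsupp.single (i + j) (1 : ℂ)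

/-- The derived series: `dser 0 = L^{[1]} = L`, `dser s = L^{[s+1]} = [L^{[s]}, L^{[s]}]`. -/
noncomputable def dser : ℕ → Submodule ℂ (ℕ →₀ ℂ)
  | 0 => ⊤
  | s + 1 => Submodule.span ℂ {w | ∃ u v, u ∈ dser s ∧ v ∈ dser s ∧ w = wbr u v}

/-- The lower central series: `lcs 0 = L¹ = L`, `lcs k = L^{k+1} = [L^k, L]`. -/
noncomputable def lcs : ℕ → Submodule ℂ (ℕ →₀ ℂ)
  | 0 => ⊤
  | k + 1 => Submodule.span ℂ {w | ∃ u v, u ∈ lcs k ∧ w = wbr u v}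

lemma wbr_single (i j : ℕ) (a b : ℂ) :
    wbr (Finsupp.single i a) (Finsupp.single j b)
      = (a * b * ((i : ℂ) - (j : ℂ))) • Finsupp.single (i + j) (1 : ℂ) := by
  rw [wbr, Finsupp.sum_single_index (by simp), Finsupp.sum_single_index (by simp)]

lemma wbr_apply (u v : ℕ →₀ ℂ) (n : ℕ) :
    wbr u v n = u.sum fun i a => v.sum fun j b =>
      if i + j = n then a * b * ((i : ℂ) - (j : ℂ)) else 0 := by
  rw [wbr, Finsupp.sum_apply]
  refine Finsupp.sum_congr fun i _ => ?_
  rw [Finsupp.sum_apply]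
  refine Finsupp.sum_congr fun j _ => ?_
  rw [Finsupp.smul_apply, Finsupp.single_apply]
  split <;> simp

lemma wbr_coeff_zero (u v : ℕ →₀ ℂ) (n : ℕ)
    (h : ∀ i ∈ u.support, ∀ j ∈ v.support, i + j = n → i = j) :
    wbr u v n = 0 := by
  rw [wbr_apply, Finsupp.sum]
  refine Finset.sum_eq_zero fun i hi => ?_
  rw [Finsupp.sum]
  refine Finset.sum_eq_zero fun j hj => ?_
  split
  · rename_i hij
    rw [h i hi j hj hij]
    ring
  · rfl

/-- The submodule of finitely supported functions vanishing below `N`,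
i.e. `span{e_i : i ≥ N}`. -/
noncomputable def Mgeq (N : ℕ) : Submodule ℂ (ℕ →₀ ℂ) where
  carrier := {f | ∀ m < N, f m = 0}
  add_mem' := by intro a b ha hb m hm; simp [ha m hm, hb m hm]
  zero_mem' := by intro m hm; simp
  smul_mem' := by intro c f hf m hm; simp [hf m hm]

lemma wbr_mem_Mgeq {s : ℕ} {u v : ℕ →₀ ℂ} (hu : u ∈ Mgeq s) (hv : v ∈ Mgeq s) :
    wbr u v ∈ Mgeq (s + 1) := by
  intro n hn
  apply wbr_coeff_zero
  intro i hi j hj hij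
  have hi' : ¬ i < s := fun h => (Finsupp.mem_support_iff.mp hi) (hu i h)
  have hj' : ¬ j < s := fun h => (Finsupp.mem_support_iff.mp hj) (hv j h)
  omega

lemma dser_le (s : ℕ) : dser s ≤ Mgeq s := by
  induction s with
  | zero => intro f _ m hm; exact absurd hm (Nat.not_lt_zero m)
  | succ s ih =>
    rw [dser]
    refine Submodule.span_le.mpr ?_
    rintro w ⟨u, v, hu, hv, rfl⟩
    exact wbr_mem_Mgeq (ih hu) (ih hv)

lemma single_mem_lcs (k n : ℕ) : Finsupp.single (n + 1) (1 : ℂ) ∈ lcs k := by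
  induction k with
  | zero => trivial
  | succ k ih =>
    have hw : wbr (Finsupp.single (n + 1) (1 : ℂ)) (Finsupp.single 0 (1 : ℂ))
        = (((n : ℂ) + 1)) • Finsupp.single (n + 1) (1 : ℂ) := by
      rw [wbr_single]; push_cast; ring_nf
    have hmem : wbr (Finsupp.single (n + 1) (1 : ℂ)) (Finsupp.single 0 (1 : ℂ)) ∈ lcs (k + 1) := by
      rw [lcs]
      exact Submodule.subset_span ⟨_, _, ih, rfl⟩
    have hne : ((n : ℂ) + 1) ≠ 0 := by
      exact_mod_cast Nat.cast_add_one_ne_zero (R := ℂ) n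
    have := Submodule.smul_mem (lcs (k + 1)) (((n : ℂ) + 1))⁻¹ hmem
    rwa [hw, smul_smul, inv_mul_cancel₀ hne, one_smul] at this

lemma span_eq_Mgeq_one :
    Submodule.span ℂ (Set.range fun i : ℕ => Finsupp.single (i + 1) (1 : ℂ)) = Mgeq 1 := by
  apply le_antisymm
  · refine Submodule.span_le.mpr ?_
    rintro _ ⟨i, rfl⟩ m hm
    interval_cases m
    simp [Finsupp.single_apply]
  · intro f hf
    rw [← Finsupp.sum_single f, Finsupp.sum]
    refine Submodule.sum_mem _ fun n hn => ?_
    have hn0 : n ≠ 0 := by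
      intro h
      exact (Finsupp.mem_support_iff.mp hn) (h ▸ hf 0 Nat.one_pos)
    obtain ⟨m, rfl⟩ : ∃ m, n = m + 1 := ⟨n - 1, by omega⟩
    have : Finsupp.single (m + 1) (f (m + 1)) = f (m + 1) • Finsupp.single (m + 1) (1 : ℂ) := by
      rw [Finsupp.smul_single, smul_eq_mul, mul_one]
    rw [this]
    exact Submodule.smul_mem _ _ (Submodule.subset_span ⟨m, rfl⟩)

/-- the non-negative part of the Witt algebra is potentially solvable but
not potentially nilpotent: `⋂ L^{[s]} = 0` while `⋂ L^k ≠ 0`; indeed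
`L^k = span{e_i : i ≥ 1}` for all `k ≥ 2`. -/
theorem statement19 :
    (⨅ s, dser s = ⊥) ∧
    (⨅ k, lcs k ≠ ⊥) ∧
    (∀ k : ℕ, 1 ≤ k →
      lcs k = Submodule.span ℂ (Set.range fun i : ℕ => Finsupp.single (i + 1) (1 : ℂ))) := by
  refine ⟨?_, ?_, ?_⟩
  · apply le_antisymm _ bot_le
    intro f hf
    have hf' : ∀ s, f ∈ dser s := Submodule.mem_iInf _ |>.mp hf
    rw [Submodule.mem_bot]
    ext n
    simpa using dser_le (n + 1) (hf' (n + 1)) n (Nat.lt_succ_self n)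
  · intro h
    have hmem : Finsupp.single 1 (1 : ℂ) ∈ (⊥ : Submodule ℂ (ℕ →₀ ℂ)) := by
      rw [← h]
      exact Submodule.mem_iInf _ |>.mpr fun k => single_mem_lcs k 0
    rw [Submodule.mem_bot] at hmem
    have := Finsupp.single_eq_zero.mp hmem
    exact one_ne_zero this
  · intro k hk
    apply le_antisymm
    · obtain ⟨m, rfl⟩ : ∃ m, k = m + 1 := ⟨k - 1, by omega⟩
      rw [lcs, span_eq_Mgeq_one]
      refine Submodule.span_le.mpr ?_
      rintro _ ⟨u, v, hu, rfl⟩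
      exact wbr_mem_Mgeq (fun m hm => absurd hm (Nat.not_lt_zero m))
        (fun m hm => absurd hm (Nat.not_lt_zero m))
    · refine Submodule.span_le.mpr ?_
      rintro _ ⟨n, rfl⟩
      exact single_mem_lcs k n
end
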